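/- For v ∈ (0,1/2), the boundary of the overlap set 𝐀 within the arc A₁ consists of the four angles ±arccos v and ±(2π/3 - arccos v), and at the interior boundary point t* = 2π/3 - arccos v the expansion factor satisfies g(t*) > 1. -/
import Mathlib

open Real

def kasnerArc (v : ℝ) : Fin 3 → Set ℝ
  | 0 => {φ : ℝ | Real.cos φ ≥ v}
  | 1 => {φ : ℝ | Real.cos (φ - 2*π/3) ≥ v}
  | 2 => {φ : ℝ | Real.cos (φ + 2*π/3) ≥ v}

def overlapSet (v : ℝ) : Set ℝ :=
  ⋃ (α : Fin 3) (β : Fin 3) (_ : α ≠ β), kasnerArc v α ∩ kasnerArc v β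

lemma cos_two_pi_div_three' : Real.cos (2*π/3) = -(1/2) := by
  rw [show (2*π/3 : ℝ) = π - π/3 by ring, Real.cos_pi_sub, Real.cos_pi_div_three]

lemma sum3 (φ : ℝ) : Real.cos (φ - 2*π/3) + Real.cos (φ + 2*π/3) = - Real.cos φ := by
  rw [Real.cos_sub, Real.cos_add, cos_two_pi_div_three']; ring

lemma sq3 (φ : ℝ) :
    (Real.cos φ)^2 + (Real.cos (φ - 2*π/3))^2 + (Real.cos (φ + 2*π/3))^2 = 3/2 := by
  have h2 : Real.sin (2*π/3) = Real.sqrt 3 / 2 := by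
    rw [show (2*π/3 : ℝ) = π - π/3 by ring, Real.sin_pi_sub, Real.sin_pi_div_three]
  have h3 : (Real.sqrt 3)^2 = 3 := Real.sq_sqrt (by norm_num)
  rw [Real.cos_sub, Real.cos_add, cos_two_pi_div_three', h2]
  linear_combination (3/2 : ℝ) * Real.sin_sq_add_cos_sq φ + ((Real.sin φ)^2 / 2) * h3

/-- at least one of the three cosines is `≥ 1/2`. -/
lemma max_ge (φ : ℝ) :
    1/2 ≤ Real.cos φ ∨ 1/2 ≤ Real.cos (φ - 2*π/3) ∨ 1/2 ≤ Real.cos (φ + 2*π/3) := by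
  by_contra hc
  push_neg at hc
  obtain ⟨h1, h2, h3⟩ := hc
  set x := Real.cos φ with hxdef
  set y := Real.cos (φ - 2*π/3) with hydef
  set z := Real.cos (φ + 2*π/3) with hzdef
  have hx1 : -1 ≤ x := Real.neg_one_le_cos φ
  have hy1 : -1 ≤ y := Real.neg_one_le_cos _
  have hz1 : -1 ≤ z := Real.neg_one_le_cos _
  have hs : y + z = -x := sum3 φ
  have hq : x^2 + y^2 + z^2 = 3/2 := sq3 φ
  have ex : 0 ≤ (x+1)*(1/2-x) := mul_nonneg (by linarith) (by linarith)
  have ey : 0 ≤ (y+1)*(1/2-y) := mul_nonneg (by linarith) (by linarith)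
  have ez : 0 ≤ (z+1)*(1/2-z) := mul_nonneg (by linarith) (by linarith)
  have hsum : (x+1)*(1/2-x) + (y+1)*(1/2-y) + (z+1)*(1/2-z) = 0 := by
    linear_combination (-1 : ℝ) * hq - (1/2 : ℝ) * hs
  have hx0 : (x+1)*(1/2-x) = 0 := le_antisymm (by linarith) ex
  have hy0 : (y+1)*(1/2-y) = 0 := le_antisymm (by linarith) ey
  have hz0 : (z+1)*(1/2-z) = 0 := le_antisymm (by linarith) ez
  have hx' : x = -1 := by rcases mul_eq_zero.mp hx0 with h | h <;> linarith
  have hy' : y = -1 := by rcases mul_eq_zero.mp hy0 with h | h <;> linarith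
  have hz' : z = -1 := by rcases mul_eq_zero.mp hz0 with h | h <;> linarith
  rw [hy', hz', hx'] at hs; norm_num at hs

lemma mem_overlap (v φ : ℝ) : φ ∈ overlapSet v ↔
    (v ≤ Real.cos φ ∧ v ≤ Real.cos (φ - 2*π/3)) ∨
    (v ≤ Real.cos φ ∧ v ≤ Real.cos (φ + 2*π/3)) ∨
    (v ≤ Real.cos (φ - 2*π/3) ∧ v ≤ Real.cos (φ + 2*π/3)) := by
  constructor
  · intro hm
    simp only [overlapSet, Set.mem_iUnion] at hm
    obtain ⟨α, β, hne, hA, hB⟩ := hm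
    fin_cases α <;> fin_cases β <;> simp_all [kasnerArc]
  · intro hm
    simp only [overlapSet, Set.mem_iUnion]
    rcases hm with ⟨h1, h2⟩ | ⟨h1, h2⟩ | ⟨h1, h2⟩
    exacts [⟨0, 1, by decide, h1, h2⟩, ⟨0, 2, by decide, h1, h2⟩, ⟨1, 2, by decide, h1, h2⟩]

noncomputable def hFun (v φ : ℝ) : ℝ :=
  (Real.cos φ - v) * (Real.cos (φ - 2*π/3) - v) * (Real.cos (φ + 2*π/3) - v)

lemma hFun_cont (v : ℝ) : Continuous (hFun v) := by
  unfold hFun; fun_prop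

lemma overlap_eq (v : ℝ) (hv0 : 0 < v) (hv2 : v < 1/2) :
    overlapSet v = {φ | hFun v φ ≤ 0} := by
  ext φ
  rw [mem_overlap, Set.mem_setOf_eq]
  set x := Real.cos φ
  set y := Real.cos (φ - 2*π/3)
  set z := Real.cos (φ + 2*π/3)
  have hs : y + z = -x := sum3 φ
  show _ ↔ (x - v) * (y - v) * (z - v) ≤ 0
  constructor
  · rintro (⟨h1, h2⟩ | ⟨h1, h2⟩ | ⟨h1, h2⟩)
    · exact mul_nonpos_of_nonneg_of_nonpos
        (mul_nonneg (by linarith) (by linarith)) (by linarith)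
    · have : (x - v) * (y - v) ≤ 0 :=
        mul_nonpos_of_nonneg_of_nonpos (by linarith) (by linarith)
      exact mul_nonpos_of_nonpos_of_nonneg this (by linarith)
    · have : (x - v) * (y - v) ≤ 0 :=
        mul_nonpos_of_nonpos_of_nonneg (by linarith) (by linarith)
      exact mul_nonpos_of_nonpos_of_nonneg this (by linarith)
  · intro hle
    rcases max_ge φ with hb | hb | hb
    · have hx : 0 < x - v := by linarith
      have hyz : (y - v) * (z - v) ≤ 0 := by
        by_contra hpos
        push_neg at hpos
        nlinarith [mul_pos hx hpos]
      rcases le_or_gt v y with h | h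
      · exact Or.inl ⟨by linarith, h⟩
      · rcases le_or_gt v z with h' | h'
        · exact Or.inr (Or.inl ⟨by linarith, h'⟩)
        · nlinarith [mul_pos (show 0 < v - y by linarith) (show 0 < v - z by linarith)]
    · have hy : 0 < y - v := by linarith
      have hxz : (x - v) * (z - v) ≤ 0 := by
        by_contra hpos
        push_neg at hpos
        nlinarith [mul_pos hy hpos]
      rcases le_or_gt v x with h | h
      · exact Or.inl ⟨h, by linarith⟩
      · rcases le_or_gt v z with h' | h'
        · exact Or.inr (Or.inr ⟨by linarith, h'⟩)
        · nlinarith [mul_pos (show 0 < v - x by linarith) (show 0 < v - z by linarith)]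
    · have hz : 0 < z - v := by linarith
      have hxy : (x - v) * (y - v) ≤ 0 := by
        by_contra hpos
        push_neg at hpos
        nlinarith [mul_pos hz hpos]
      rcases le_or_gt v x with h | h
      · exact Or.inr (Or.inl ⟨h, by linarith⟩)
      · rcases le_or_gt v y with h' | h'
        · exact Or.inr (Or.inr ⟨h', by linarith⟩)
        · nlinarith [mul_pos (show 0 < v - x by linarith) (show 0 < v - y by linarith)]

/-- For `v ∈ (0,1/2)`, the boundary of the overlap set `𝐀` within the arc
`A₁ = [-arccos v, arccos v]` consists of the four angles `±arccos v` and `±(2π/3 - arccos v)`,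
and at the interior boundary point `t* = 2π/3 - arccos v` the expansion factor
`g(t*) = (1-v²)/(v² + 1 - 2v cos t*)` satisfies `g(t*) > 1`. -/
theorem overlap_boundary_in_A1 (v : ℝ) (hv : v ∈ Set.Ioo (0:ℝ) (1/2)) :
    frontier (overlapSet v) ∩ Set.Icc (-Real.arccos v) (Real.arccos v)
      = {-Real.arccos v, -(2*π/3 - Real.arccos v), 2*π/3 - Real.arccos v, Real.arccos v} ∧
    (1 - v ^ 2) / (v ^ 2 + 1 - 2 * v * Real.cos (2*π/3 - Real.arccos v)) > 1 := by
  obtain ⟨hv0, hv2⟩ := hv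
  have hπ := Real.pi_pos
  set a := Real.arccos v with hadef
  have hca : Real.cos a = v := Real.cos_arccos (by linarith) (by linarith)
  have ha0 : 0 ≤ a := Real.arccos_nonneg v
  have haπ : a ≤ π := Real.arccos_le_pi v
  have ha2 : a < π/2 := Real.arccos_lt_pi_div_two.mpr hv0
  have ha1 : π/3 < a := by
    have h13 : Real.arccos (1/2) = π/3 :=
      Real.arccos_eq_of_eq_cos (by linarith) (by linarith) Real.cos_pi_div_three.symm
    rw [hadef, ← h13]
    exact Real.strictAntiOn_arccos ⟨by linarith, by linarith⟩ (by norm_num) hv2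
  -- cosine comparison helpers
  have hcos_lt : ∀ {s : ℝ}, a < s → s ≤ π → Real.cos s < v := by
    intro s h1 h2
    have := Real.strictAntiOn_cos ⟨ha0, haπ⟩ ⟨by linarith, h2⟩ h1
    linarith [hca ▸ this]
  have hcos_gt : ∀ {s : ℝ}, 0 ≤ s → s < a → v < Real.cos s := by
    intro s h1 h2
    have := Real.strictAntiOn_cos ⟨h1, by linarith⟩ ⟨ha0, haπ⟩ h2
    linarith [hca ▸ this]
  -- positivity of hFun on the two model intervals
  have posA : ∀ φ : ℝ, a < φ → φ < a + π/6 → 0 < hFun v φ := by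
    intro φ h1 h2
    have c1 : Real.cos φ < v := hcos_lt h1 (by linarith)
    have c2 : v < Real.cos (φ - 2*π/3) := by
      rw [show φ - 2*π/3 = -(2*π/3 - φ) by ring, Real.cos_neg]
      exact hcos_gt (by linarith) (by linarith)
    have c3 : Real.cos (φ + 2*π/3) < 0 :=
      Real.cos_neg_of_pi_div_two_lt_of_lt (by linarith) (by linarith)
    show 0 < (Real.cos φ - v) * (Real.cos (φ - 2*π/3) - v) * (Real.cos (φ + 2*π/3) - v)
    nlinarith [mul_pos (mul_pos (show 0 < v - Real.cos φ by linarith)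
      (show 0 < Real.cos (φ - 2*π/3) - v by linarith))
      (show 0 < v - Real.cos (φ + 2*π/3) by linarith)]
  have posB : ∀ φ : ℝ, 2*π/3 - a - π/6 < φ → φ < 2*π/3 - a → 0 < hFun v φ := by
    intro φ h1 h2
    have c1 : v < Real.cos φ := hcos_gt (by linarith) (by linarith)
    have c2 : Real.cos (φ - 2*π/3) < v := by
      rw [show φ - 2*π/3 = -(2*π/3 - φ) by ring, Real.cos_neg]
      exact hcos_lt (by linarith) (by linarith)
    have c3 : Real.cos (φ + 2*π/3) < 0 :=
      Real.cos_neg_of_pi_div_two_lt_of_lt (by linarith) (by linarith)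
    show 0 < (Real.cos φ - v) * (Real.cos (φ - 2*π/3) - v) * (Real.cos (φ + 2*π/3) - v)
    nlinarith [mul_pos (mul_pos (show 0 < Real.cos φ - v by linarith)
      (show 0 < v - Real.cos (φ - 2*π/3) by linarith))
      (show 0 < v - Real.cos (φ + 2*π/3) by linarith)]
  have hEven : ∀ φ : ℝ, hFun v (-φ) = hFun v φ := by
    intro φ
    unfold hFun
    rw [show -φ - 2*π/3 = -(φ + 2*π/3) by ring, show -φ + 2*π/3 = -(φ - 2*π/3) by ring,
      Real.cos_neg, Real.cos_neg, Real.cos_neg]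
    ring
  have hS : overlapSet v = {φ | hFun v φ ≤ 0} := overlap_eq v hv0 hv2
  have hfr : frontier {φ | hFun v φ ≤ 0} ⊆ {φ | hFun v φ = 0} :=
    frontier_le_subset_eq (hFun_cont v) continuous_const
  -- frontier membership criterion
  have hmem_fr : ∀ t c d : ℝ, hFun v t = 0 → c < d → t ∈ Set.Icc c d →
      (∀ φ ∈ Set.Ioo c d, 0 < hFun v φ) → t ∈ frontier {φ | hFun v φ ≤ 0} := by
    intro t c d ht hcd htm hpos
    rw [frontier_eq_closure_inter_closure]
    refine ⟨subset_closure (by simp [ht]), ?_⟩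
    have hsub : Set.Ioo c d ⊆ {φ | hFun v φ ≤ 0}ᶜ := by
      intro φ hφ
      simp only [Set.mem_compl_iff, Set.mem_setOf_eq, not_le]
      exact hpos φ hφ
    exact closure_mono hsub (by rw [closure_Ioo hcd.ne]; exact htm)
  -- the four boundary points
  have hza : hFun v a = 0 := by
    show (Real.cos a - v) * _ * _ = 0
    rw [hca]; ring
  have hzt : hFun v (2*π/3 - a) = 0 := by
    show _ * (Real.cos (2*π/3 - a - 2*π/3) - v) * _ = 0
    rw [show 2*π/3 - a - 2*π/3 = -a by ring, Real.cos_neg, hca]; ring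
  have hfa : a ∈ frontier {φ | hFun v φ ≤ 0} :=
    hmem_fr a a (a + π/6) hza (by linarith) ⟨le_refl a, by linarith⟩
      (fun φ hφ => posA φ hφ.1 hφ.2)
  have hft : (2*π/3 - a) ∈ frontier {φ | hFun v φ ≤ 0} :=
    hmem_fr _ (2*π/3 - a - π/6) (2*π/3 - a) hzt (by linarith) ⟨by linarith, le_refl _⟩
      (fun φ hφ => posB φ hφ.1 hφ.2)
  have hfna : (-a) ∈ frontier {φ | hFun v φ ≤ 0} := by
    refine hmem_fr (-a) (-(a + π/6)) (-a) (by rw [hEven]; exact hza) (by linarith)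
      ⟨by linarith, le_refl _⟩ (fun φ hφ => ?_)
    obtain ⟨h1, h2⟩ := hφ
    have h := posA (-φ) (by linarith) (by linarith)
    rwa [hEven] at h
  have hfnt : (-(2*π/3 - a)) ∈ frontier {φ | hFun v φ ≤ 0} := by
    refine hmem_fr _ (-(2*π/3 - a)) (-(2*π/3 - a) + π/6) (by rw [hEven]; exact hzt) (by linarith)
      ⟨le_refl _, by linarith⟩ (fun φ hφ => ?_)
    obtain ⟨h1, h2⟩ := hφ
    have h := posB (-φ) (by linarith) (by linarith)
    rwa [hEven] at h
  constructor
  · rw [hS]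
    ext t
    simp only [Set.mem_inter_iff, Set.mem_Icc, Set.mem_insert_iff, Set.mem_singleton_iff]
    constructor
    · rintro ⟨htf, ht1, ht2⟩
      have ht0 : hFun v t = 0 := hfr htf
      have ht0' : (Real.cos t - v) * (Real.cos (t - 2*π/3) - v) * (Real.cos (t + 2*π/3) - v) = 0 := ht0
      rcases mul_eq_zero.mp ht0' with h | h
      · rcases mul_eq_zero.mp h with h' | h'
        · -- cos t = v
          have hct : Real.cos t = v := by linarith [sub_eq_zero.mp h']
          have habs : |t| = a := by
            apply Real.injOn_cos ⟨abs_nonneg t, by rw [abs_le]; constructor <;> linarith⟩ ⟨ha0, haπ⟩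
            rw [Real.cos_abs, hct, hca]
          rcases abs_eq ha0 |>.mp habs with h'' | h''
          · tauto
          · tauto
        · -- cos (t - 2π/3) = v
          have hct : Real.cos (2*π/3 - t) = v := by
            rw [show 2*π/3 - t = -(t - 2*π/3) by ring, Real.cos_neg]; linarith [sub_eq_zero.mp h']
          rcases le_or_gt (2*π/3 - t) π with hsπ | hsπ
          · have : 2*π/3 - t = a :=
              Real.injOn_cos ⟨by linarith, hsπ⟩ ⟨ha0, haπ⟩ (by rw [hct, hca])
            right; right; left; linarith
          · exfalso
            have : Real.cos (2*π/3 - t) < 0 :=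
              Real.cos_neg_of_pi_div_two_lt_of_lt (by linarith) (by linarith)
            linarith [hct ▸ this]
      · -- cos (t + 2π/3) = v
        have hct : Real.cos (t + 2*π/3) = v := by linarith [sub_eq_zero.mp h]
        rcases le_or_gt (t + 2*π/3) π with hsπ | hsπ
        · have : t + 2*π/3 = a :=
            Real.injOn_cos ⟨by linarith, hsπ⟩ ⟨ha0, haπ⟩ (by rw [hct, hca])
          right; left; linarith
        · exfalso
          have : Real.cos (t + 2*π/3) < 0 :=
            Real.cos_neg_of_pi_div_two_lt_of_lt (by linarith) (by linarith)
          linarith [hct ▸ this]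
    · rintro (rfl | rfl | rfl | rfl)
      · exact ⟨hfna, by linarith, by linarith⟩
      · exact ⟨hfnt, by linarith, by linarith⟩
      · exact ⟨hft, by linarith, by linarith⟩
      · exact ⟨hfa, by linarith, by linarith⟩
  · have hct : v < Real.cos (2*π/3 - a) := hcos_gt (by linarith) (by linarith)
    have hc1 : Real.cos (2*π/3 - a) ≤ 1 := Real.cos_le_one _
    have hD : 0 < v^2 + 1 - 2*v*Real.cos (2*π/3 - a) := by nlinarith
    rw [gt_iff_lt, one_lt_div hD]
    nlinarith [mul_pos hv0 (show 0 < Real.cos (2*π/3 - a) - v by linarith)]
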